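/- arXiv:1908.09113 — 2 statements merged into one kernel-verified Lean document; each statement's English description precedes it below -/
import Mathlib

section
/- Let φ : ℝ² → ℝ be 1-Lipschitz and suppose [x,y] and [x',y'] are two segments with φ(x) - φ(y) = |x - y| and φ(x') - φ(y') = |x' - y'|. If the open segments (x,y) and (x',y') intersect at a point z with z ∉ {x,y} ∩ {x',y'}, and the two segments are not collinear, then a contradiction follows; i.e., two distinct transport rays cannot cross at a point interior to both of them. -/
/-!
Along a transport ray `φ` decreases at unit speed. If `z` lies on the rays `[x, y]` and
`[x', y']`, then `φ` also decreases at unit speed along the broken path `x → z → y'`; as `φ` is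
1-Lipschitz this forces `|x - z| + |z - y'| = |x - y'|`, so `z ∈ [x, y']` by strict convexity
of the Euclidean norm. Likewise `z ∈ [x', y]`, and since `z` is neither `x` nor `y`, the lines
through `z` spanned by these segments all coincide.
-/

open Set

def IsTransportRay {P : Type*} [PseudoMetricSpace P] (φ : P → ℝ) (x y : P) : Prop :=
  φ x - φ y = dist x y

theorem LipschitzWith.sub_le_dist {α : Type*} [PseudoMetricSpace α] {φ : α → ℝ}
    (hφ : LipschitzWith 1 φ) (x y : α) : φ x - φ y ≤ dist x y := by
  have := hφ.le_add_mul x y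
  rw [NNReal.coe_one, one_mul] at this
  linarith

namespace IsTransportRay

variable {P : Type*} [PseudoMetricSpace P] {φ : P → ℝ} {x y z : P}

theorem split (hφ : LipschitzWith 1 φ) (h : IsTransportRay φ x y)
    (hz : dist x z + dist z y = dist x y) : IsTransportRay φ x z ∧ IsTransportRay φ z y := by
  unfold IsTransportRay at *
  have hxz := hφ.sub_le_dist x z
  have hzy := hφ.sub_le_dist z y
  constructor <;> linarith

theorem dist_add_dist_eq (hφ : LipschitzWith 1 φ) (hxz : IsTransportRay φ x z)
    (hzy : IsTransportRay φ z y) : dist x z + dist z y = dist x y := by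
  unfold IsTransportRay at *
  have := dist_triangle x z y
  have := hφ.sub_le_dist x y
  linarith

end IsTransportRay

theorem Wbtw.of_isTransportRay {V P : Type*} [NormedAddCommGroup V] [NormedSpace ℝ V]
    [StrictConvexSpace ℝ V] [MetricSpace P] [NormedAddTorsor V P] {φ : P → ℝ}
    (hφ : LipschitzWith 1 φ) {x y x' y' z : P} (hxy : IsTransportRay φ x y)
    (hx'y' : IsTransportRay φ x' y') (h : Wbtw ℝ x z y) (h' : Wbtw ℝ x' z y') :
    Wbtw ℝ x z y' :=
  dist_add_dist_eq_iff.1 <|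
    IsTransportRay.dist_add_dist_eq hφ (hxy.split hφ h.dist_add_dist).1
      (hx'y'.split hφ h'.dist_add_dist).2

theorem collinear_of_collinear_triples {k V P : Type*} [Field k] [AddCommGroup V]
    [Module k V] [AddTorsor V P] {x y x' y' z : P} (hxy : Collinear k {x, z, y})
    (hxy' : Collinear k {x, z, y'}) (hx'y : Collinear k {x', z, y}) (hzx : z ≠ x) (hzy : z ≠ y) :
    Collinear k {x, y, x', y'} := by
  have hy : y ∈ line[k, x, z] :=
    hxy.mem_affineSpan_of_mem_of_ne (by simp) (by simp) (by simp) hzx.symm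
  have hy' : y' ∈ line[k, x, z] :=
    hxy'.mem_affineSpan_of_mem_of_ne (by simp) (by simp) (by simp) hzx.symm
  have hline : line[k, z, y] = line[k, x, z] := by
    rw [hxy.affineSpan_eq_of_ne (by simp) (by simp) hzy,
      hxy.affineSpan_eq_of_ne (by simp) (by simp) hzx.symm]
  have hx' : x' ∈ line[k, x, z] :=
    hline ▸ hx'y.mem_affineSpan_of_mem_of_ne (by simp) (by simp) (by simp) hzy
  exact (collinear_insert_insert_insert_left_of_mem_affineSpan_pair hy hx' hy').subset
    (by intro p; simp only [mem_insert_iff, mem_singleton_iff]; tauto)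

/-- two transport rays of a 1-Lipschitz potential which are not contained in a
common line cannot cross at a point interior to both of them. -/
theorem transport_rays_cannot_cross
    (φ : EuclideanSpace ℝ (Fin 2) → ℝ) (hφ : LipschitzWith 1 φ)
    (x y x' y' z : EuclideanSpace ℝ (Fin 2))
    (hxy : φ x - φ y = ‖x - y‖) (hxy' : φ x' - φ y' = ‖x' - y'‖)
    (hz : z ∈ openSegment ℝ x y) (hz' : z ∈ openSegment ℝ x' y')
    (hnotcol : ¬ Collinear ℝ ({x, y, x', y'} : Set (EuclideanSpace ℝ (Fin 2)))) :
    False := by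
  have hw := mem_segment_iff_wbtw.1 (openSegment_subset_segment ℝ _ _ hz)
  have hw' := mem_segment_iff_wbtw.1 (openSegment_subset_segment ℝ _ _ hz')
  rcases eq_or_ne x y with rfl | hne
  · obtain rfl : z = x := by simpa using hz
    exact hnotcol <| hw'.collinear.subset <| by
      intro p; simp only [mem_insert_iff, mem_singleton_iff]; tauto
  have hzx : z ≠ x := fun h => hne (left_mem_openSegment_iff.1 (h ▸ hz))
  have hzy : z ≠ y := fun h => hne (right_mem_openSegment_iff.1 (h ▸ hz))
  rw [← dist_eq_norm] at hxy hxy'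
  exact hnotcol <| collinear_of_collinear_triples hw.collinear
    (hw.of_isTransportRay hφ hxy hxy' hw').collinear
    (hw'.of_isTransportRay hφ hxy' hxy hw).collinear hzx hzy
end

section
/- Mass of the Beckmann flow induced by a transport plan equals the transport cost: with w_γ defined by ⟨w_γ, ξ⟩ = ∫_{K×K} ∫₀¹ ξ((1-t)x+ty)·(y-x) dt dγ(x,y), one has |w_γ|(K) ≤ ∫_{K×K} |x - y| dγ(x,y). Consequently, if γ is an optimal transport plan and the strong duality min(Kantorovich) = sup(dual) holds, then w_γ minimizes |v|(K) among all vector measures v with ∇·v = f⁺ - f⁻, and min |v|(K) = ∫ |x-y| dγ. -/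
/-!
Put `ν = dt ⊗ γ` on `[0, 1] × (E2 × E2)` and `T (t, x, y) = (1 - t) x + t y`, so that
`σ_γ = T_*(|x - y| ν)` and the Beckmann flow is `w_γ = T_*((x - y) ν)`. Since the vector density
`x - y` is dominated by the scalar density `|x - y|`, every coordinate of `w_γ` is absolutely
continuous with respect to `σ_γ`; testing the Radon–Nikodym density `w₀` against a countable dense
set of directions `e` (where `∫_s e · w₀ dσ_γ ≤ |e| σ_γ(s)`) gives `|w₀| ≤ 1`, and the mass of
`σ_γ` is `∫ |x - y| dγ`. The divergence identity is the fundamental theorem of calculus along each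
segment `[x, y]`. For minimality, the Kantorovich potential, extended to a `1`-Lipschitz function
on the plane, is mollified into smooth `1`-Lipschitz test functions `ψ`, for which
`∫ ψ d(f⁺ - f⁻) = ∫ ∇ψ · w dμ ≤ μ(ℝ²)`; the mollification error vanishes in the limit.
-/

open MeasureTheory
open scoped RealInnerProductSpace ENNReal

noncomputable section

abbrev E2 := EuclideanSpace ℝ (Fin 2)

/-- The transport density `σ_γ` of a plan `γ`, defined by
`⟨σ_γ, φ⟩ = ∫∫₀¹ φ((1-t)x + ty)|x - y| dt dγ(x,y)`. -/
def transportDensity (γ : Measure (E2 × E2)) : Measure E2 :=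
  Measure.map (fun q : ℝ × (E2 × E2) => (1 - q.1) • q.2.1 + q.1 • q.2.2)
    ((((volume : Measure ℝ).restrict (Set.Icc 0 1)).prod γ).withDensity
      fun q => edist q.2.1 q.2.2)

open scoped NNReal

theorem mul_eq_toReal_ofReal_mul_sub_toReal_ofReal_neg_mul (x y : ℝ) :
    y * x = (ENNReal.ofReal x).toReal * y - (ENNReal.ofReal (-x)).toReal * y := by
  rw [← sub_mul, ENNReal.toReal_ofReal', ENNReal.toReal_ofReal',
    max_zero_sub_max_neg_zero_eq_self, mul_comm]

theorem ENNReal.ofReal_le_of_enorm_le {r : ℝ} {c : ℝ≥0∞} (h : ‖r‖ₑ ≤ c) :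
    ENNReal.ofReal r ≤ c :=
  (Real.ofReal_le_enorm r).trans h

theorem ENNReal.ofReal_neg_le_of_enorm_le {r : ℝ} {c : ℝ≥0∞} (h : ‖r‖ₑ ≤ c) :
    ENNReal.ofReal (-r) ≤ c :=
  ENNReal.ofReal_le_of_enorm_le ((enorm_neg r).trans_le h)

theorem EuclideanSpace.real_inner_eq_sum {ι : Type*} [Fintype ι] (x y : EuclideanSpace ℝ ι) :
    ⟪x, y⟫ = ∑ i, x i * y i := by
  simp [PiLp.inner_apply, mul_comm]

theorem MeasureTheory.Integrable.euclideanSpace_apply {β ι : Type*} [MeasurableSpace β]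
    [Fintype ι] {μ : Measure β} {G : β → EuclideanSpace ℝ ι} (hG : Integrable G μ) (i : ι) :
    Integrable (fun x => G x i) μ :=
  (EuclideanSpace.proj i : EuclideanSpace ℝ ι →L[ℝ] ℝ).integrable_comp hG

theorem norm_le_one_of_denseRange_inner_le {E : Type*} [NormedAddCommGroup E]
    [InnerProductSpace ℝ E] {u : ℕ → E} (hu : DenseRange u) {v : E}
    (h : ∀ n, ⟪u n, v⟫ ≤ ‖u n‖) : ‖v‖ ≤ 1 := by
  have hv : ⟪v, v⟫ ≤ ‖v‖ := hu.induction_on (p := fun e => ⟪e, v⟫ ≤ ‖e‖) v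
    (isClosed_le (continuous_id.inner continuous_const) continuous_norm) h
  rw [real_inner_self_eq_norm_sq] at hv
  nlinarith [norm_nonneg v]

theorem MeasureTheory.Integrable.of_continuousOn_of_ae_mem {X E : Type*} [TopologicalSpace X]
    [T2Space X] [MeasurableSpace X] [OpensMeasurableSpace X] [NormedAddCommGroup E]
    {μ : Measure X} [IsFiniteMeasure μ] {K : Set X} (hK : IsCompact K) (hμK : ∀ᵐ x ∂μ, x ∈ K)
    {f : X → E} (hf : ContinuousOn f K) : Integrable f μ := by
  rw [← Measure.restrict_eq_self_of_ae_mem hμK]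
  exact hf.integrableOn_compact hK

section PushforwardDensity

variable {α β : Type*} [MeasurableSpace α] [MeasurableSpace β] {ν : Measure α} {T : α → β}
  {ρ θ : α → ℝ≥0∞}

theorem integral_map_withDensity (hT : Measurable T) (hθ : Measurable θ)
    (hθ_lt_top : ∀ᵐ a ∂ν, θ a < ∞) {g : β → ℝ}
    (hg : AEStronglyMeasurable g ((ν.withDensity θ).map T)) :
    ∫ x, g x ∂((ν.withDensity θ).map T) = ∫ a, (θ a).toReal * g (T a) ∂ν := by
  rw [integral_map hT.aemeasurable hg,
    integral_withDensity_eq_integral_toReal_smul₀ hθ.aemeasurable hθ_lt_top]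
  rfl

theorem map_withDensity_mono (hT : Measurable T) (hθρ : ∀ a, θ a ≤ ρ a) :
    (ν.withDensity θ).map T ≤ (ν.withDensity ρ).map T :=
  Measure.map_mono (withDensity_mono (.of_forall hθρ)) hT

/-- The density of `T_*(f ν)` with respect to `T_*(ρ ν)`, when `|f| ≤ ρ`. -/
def pushforwardDensity (ν : Measure α) (T : α → β) (ρ : α → ℝ≥0∞) (f : α → ℝ) (x : β) : ℝ :=
  (((ν.withDensity fun a => .ofReal (f a)).map T).rnDeriv ((ν.withDensity ρ).map T) x).toReal -
    (((ν.withDensity fun a => .ofReal (-f a)).map T).rnDeriv ((ν.withDensity ρ).map T) x).toReal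

variable {ι : Type*} {F : α → EuclideanSpace ℝ ι} {G : β → EuclideanSpace ℝ ι}

def pushforwardDirection (ν : Measure α) (T : α → β) (ρ : α → ℝ≥0∞)
    (F : α → EuclideanSpace ℝ ι) (x : β) : EuclideanSpace ℝ ι :=
  WithLp.toLp 2 fun i => pushforwardDensity ν T ρ (fun a => F a i) x

@[simp]
theorem pushforwardDirection_apply (x : β) (i : ι) :
    pushforwardDirection ν T ρ F x i = pushforwardDensity ν T ρ (fun a => F a i) x :=
  rfl

variable [IsFiniteMeasure (ν.withDensity ρ)] {f : α → ℝ} {g : β → ℝ} [Fintype ι]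

theorem ae_lt_top_of_le_of_isFiniteMeasure_withDensity (hθ : Measurable θ)
    (hθρ : ∀ a, θ a ≤ ρ a) : ∀ᵐ a ∂ν, θ a < ∞ := by
  have := isFiniteMeasure_of_le _ (withDensity_mono (μ := ν) (.of_forall hθρ))
  refine ae_lt_top hθ ?_
  simpa [withDensity_apply] using measure_ne_top (ν.withDensity θ) Set.univ

theorem integrable_rnDeriv_map_withDensity_mul (hT : Measurable T) (hθρ : ∀ a, θ a ≤ ρ a)
    (hg : Integrable g ((ν.withDensity ρ).map T)) :
    Integrable (fun x => (((ν.withDensity θ).map T).rnDeriv ((ν.withDensity ρ).map T) x).toReal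
      * g x) ((ν.withDensity ρ).map T) :=
  have hle := map_withDensity_mono hT hθρ
  have := isFiniteMeasure_of_le _ hle
  (integrable_toReal_rnDeriv_mul_iff hle.absolutelyContinuous).2 (hg.mono_measure hle)

theorem integrable_toReal_mul_comp (hT : Measurable T) (hθ : Measurable θ)
    (hθρ : ∀ a, θ a ≤ ρ a) (hg : Integrable g ((ν.withDensity ρ).map T)) :
    Integrable (fun a => (θ a).toReal * g (T a)) ν :=
  (integrable_withDensity_iff_integrable_smul' hθ
    (ae_lt_top_of_le_of_isFiniteMeasure_withDensity hθ hθρ)).1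
    ((hg.mono_measure (map_withDensity_mono hT hθρ)).comp_measurable hT)

theorem integral_rnDeriv_map_withDensity_mul (hT : Measurable T) (hθ : Measurable θ)
    (hθρ : ∀ a, θ a ≤ ρ a) (hg : Integrable g ((ν.withDensity ρ).map T)) :
    ∫ x, (((ν.withDensity θ).map T).rnDeriv ((ν.withDensity ρ).map T) x).toReal * g x
      ∂((ν.withDensity ρ).map T) = ∫ a, (θ a).toReal * g (T a) ∂ν := by
  have hle := map_withDensity_mono (ν := ν) hT hθρ
  have := isFiniteMeasure_of_le _ hle
  rw [integral_toReal_rnDeriv_mul hle.absolutelyContinuous,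
    integral_map_withDensity hT hθ (ae_lt_top_of_le_of_isFiniteMeasure_withDensity hθ hθρ)
      (hg.mono_measure hle).aestronglyMeasurable]

section Parts

variable (hfρ : ∀ a, ‖f a‖ₑ ≤ ρ a)
include hfρ

theorem integrable_mul_pushforwardDensity (hT : Measurable T)
    (hg : Integrable g ((ν.withDensity ρ).map T)) :
    Integrable (fun x => g x * pushforwardDensity ν T ρ f x) ((ν.withDensity ρ).map T) := by
  have hpos_le a : ENNReal.ofReal (f a) ≤ ρ a := ENNReal.ofReal_le_of_enorm_le (hfρ a)
  have hneg_le a : ENNReal.ofReal (-f a) ≤ ρ a := ENNReal.ofReal_neg_le_of_enorm_le (hfρ a)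
  refine ((integrable_rnDeriv_map_withDensity_mul hT hpos_le hg).sub
    (integrable_rnDeriv_map_withDensity_mul hT hneg_le hg)).congr (.of_forall fun x => ?_)
  simp only [Pi.sub_apply, pushforwardDensity]
  ring

theorem integrable_comp_mul (hT : Measurable T) (hf : Measurable f)
    (hg : Integrable g ((ν.withDensity ρ).map T)) :
    Integrable (fun a => g (T a) * f a) ν := by
  have hneg : Measurable fun a => ENNReal.ofReal (-f a) := hf.neg.ennreal_ofReal
  simp only [mul_eq_toReal_ofReal_mul_sub_toReal_ofReal_neg_mul (f _)]
  exact (integrable_toReal_mul_comp hT hf.ennreal_ofReal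
      (fun a => ENNReal.ofReal_le_of_enorm_le (hfρ a)) hg).sub
    (integrable_toReal_mul_comp hT hneg (fun a => ENNReal.ofReal_neg_le_of_enorm_le (hfρ a)) hg)

theorem integral_mul_pushforwardDensity (hT : Measurable T) (hf : Measurable f)
    (hg : Integrable g ((ν.withDensity ρ).map T)) :
    ∫ x, g x * pushforwardDensity ν T ρ f x ∂((ν.withDensity ρ).map T) =
      ∫ a, g (T a) * f a ∂ν := by
  have hpos : Measurable fun a => ENNReal.ofReal (f a) := hf.ennreal_ofReal
  have hneg : Measurable fun a => ENNReal.ofReal (-f a) := hf.neg.ennreal_ofReal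
  have hpos_le a : ENNReal.ofReal (f a) ≤ ρ a := ENNReal.ofReal_le_of_enorm_le (hfρ a)
  have hneg_le a : ENNReal.ofReal (-f a) ≤ ρ a := ENNReal.ofReal_neg_le_of_enorm_le (hfρ a)
  simp only [mul_eq_toReal_ofReal_mul_sub_toReal_ofReal_neg_mul (f _), pushforwardDensity,
    mul_sub]
  rw [integral_sub (integrable_toReal_mul_comp hT hpos hpos_le hg)
      (integrable_toReal_mul_comp hT hneg hneg_le hg),
    ← integral_rnDeriv_map_withDensity_mul hT hpos hpos_le hg,
    ← integral_rnDeriv_map_withDensity_mul hT hneg hneg_le hg,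
    ← integral_sub (integrable_rnDeriv_map_withDensity_mul hT hpos_le hg)
      (integrable_rnDeriv_map_withDensity_mul hT hneg_le hg)]
  simp only [mul_comm]

end Parts

section Direction

variable (hT : Measurable T) (hF : Measurable F) (hFρ : ∀ a, ‖F a‖ₑ ≤ ρ a)
include hT hFρ

theorem integrable_inner_pushforwardDirection (hG : Integrable G ((ν.withDensity ρ).map T)) :
    Integrable (fun x => ⟪G x, pushforwardDirection ν T ρ F x⟫) ((ν.withDensity ρ).map T) := by
  simp only [EuclideanSpace.real_inner_eq_sum, pushforwardDirection_apply]
  exact integrable_finsetSum _ fun i _ => integrable_mul_pushforwardDensity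
    (fun a => (PiLp.enorm_apply_le (F a) i).trans (hFρ a)) hT (hG.euclideanSpace_apply i)

include hF

theorem integrable_inner_comp (hG : Integrable G ((ν.withDensity ρ).map T)) :
    Integrable (fun a => ⟪G (T a), F a⟫) ν := by
  simp only [EuclideanSpace.real_inner_eq_sum]
  exact integrable_finsetSum _ fun i _ => integrable_comp_mul
    (fun a => (PiLp.enorm_apply_le (F a) i).trans (hFρ a)) hT (by fun_prop)
    (hG.euclideanSpace_apply i)

theorem integral_inner_pushforwardDirection (hG : Integrable G ((ν.withDensity ρ).map T)) :
    ∫ x, ⟪G x, pushforwardDirection ν T ρ F x⟫ ∂((ν.withDensity ρ).map T) =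
      ∫ a, ⟪G (T a), F a⟫ ∂ν := by
  have hFi i a : ‖F a i‖ₑ ≤ ρ a := (PiLp.enorm_apply_le (F a) i).trans (hFρ a)
  have hFi_meas i : Measurable fun a => F a i := by fun_prop
  simp only [EuclideanSpace.real_inner_eq_sum, pushforwardDirection_apply]
  rw [integral_finsetSum _ fun i _ => integrable_mul_pushforwardDensity (hFi i) hT
      (hG.euclideanSpace_apply i),
    integral_finsetSum _ fun i _ => integrable_comp_mul (hFi i) hT (hFi_meas i)
      (hG.euclideanSpace_apply i)]
  exact Finset.sum_congr rfl fun i _ =>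
    integral_mul_pushforwardDensity (hFi i) hT (hFi_meas i) (hG.euclideanSpace_apply i)

theorem ae_inner_pushforwardDirection_le (hρ : Measurable ρ) (e : EuclideanSpace ℝ ι) :
    ∀ᵐ x ∂((ν.withDensity ρ).map T), ⟪e, pushforwardDirection ν T ρ F x⟫ ≤ ‖e‖ := by
  refine ae_le_of_forall_setIntegral_le
    (integrable_inner_pushforwardDirection hT hFρ (integrable_const e)) (integrable_const _)
    fun s hs _ => ?_
  have hGs : Integrable (s.indicator fun _ => e) ((ν.withDensity ρ).map T) :=
    (integrable_const e).indicator hs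
  have hρ_lt_top := ae_lt_top_of_le_of_isFiniteMeasure_withDensity (ν := ν) hρ fun _ => le_rfl
  have hbound : ∀ᵐ a ∂ν, ⟪s.indicator (fun _ => e) (T a), F a⟫ ≤
      (ρ a).toReal * s.indicator (fun _ => ‖e‖) (T a) := by
    filter_upwards [hρ_lt_top] with a ha
    by_cases hTa : T a ∈ s
    · simp only [Set.indicator_of_mem hTa, mul_comm (ρ a).toReal]
      refine (real_inner_le_norm e (F a)).trans (mul_le_mul_of_nonneg_left ?_ (norm_nonneg e))
      rw [← toReal_enorm]
      exact ENNReal.toReal_mono ha.ne (hFρ a)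
    · simp [Set.indicator_of_notMem hTa]
  calc ∫ x in s, ⟪e, pushforwardDirection ν T ρ F x⟫ ∂((ν.withDensity ρ).map T)
      = ∫ x, ⟪s.indicator (fun _ => e) x, pushforwardDirection ν T ρ F x⟫
          ∂((ν.withDensity ρ).map T) := by
        rw [← integral_indicator hs]
        congr with x
        by_cases hx : x ∈ s <;> simp [hx]
    _ = ∫ a, ⟪s.indicator (fun _ => e) (T a), F a⟫ ∂ν :=
        integral_inner_pushforwardDirection hT hF hFρ hGs
    _ ≤ ∫ a, (ρ a).toReal * s.indicator (fun _ => ‖e‖) (T a) ∂ν :=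
        integral_mono_ae (integrable_inner_comp hT hF hFρ hGs)
          (integrable_toReal_mul_comp hT hρ (fun _ => le_rfl)
            ((integrable_const _).indicator hs)) hbound
    _ = ∫ x, s.indicator (fun _ => ‖e‖) x ∂((ν.withDensity ρ).map T) :=
        (integral_map_withDensity hT hρ hρ_lt_top
          ((integrable_const _).indicator hs).aestronglyMeasurable).symm
    _ = ∫ x in s, ‖e‖ ∂((ν.withDensity ρ).map T) := integral_indicator hs

theorem ae_norm_pushforwardDirection_le_one (hρ : Measurable ρ) :
    ∀ᵐ x ∂((ν.withDensity ρ).map T), ‖pushforwardDirection ν T ρ F x‖ ≤ 1 := by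
  have h := ae_all_iff.2 fun n =>
    ae_inner_pushforwardDirection_le (ν := ν) hT hF hFρ hρ (TopologicalSpace.denseSeq _ n)
  filter_upwards [h] with x hx
  exact norm_le_one_of_denseRange_inner_le (TopologicalSpace.denseRange_denseSeq _) hx

end Direction

end PushforwardDensity

section LipschitzSmoothing

open scoped ContDiff Convolution

variable {E F : Type*} [NormedAddCommGroup E] [NormedSpace ℝ E] [FiniteDimensional ℝ E]
  [NormedAddCommGroup F] [NormedSpace ℝ F] {K : ℝ≥0} {g : E → F}

theorem ContDiffBump.lipschitzWith_normed_convolution [MeasurableSpace E] [BorelSpace E]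
    {μ : Measure E} [μ.IsAddHaarMeasure] (k : ContDiffBump (0 : E)) (hg : LipschitzWith K g) :
    LipschitzWith K (k.normed μ ⋆[ContinuousLinearMap.lsmul ℝ ℝ, μ] g) := by
  have hconv : ConvolutionExists (k.normed μ) g (ContinuousLinearMap.lsmul ℝ ℝ) μ :=
    k.hasCompactSupport_normed.convolutionExists_left _ k.continuous_normed
      hg.continuous.locallyIntegrable
  refine LipschitzWith.of_dist_le_mul fun a b => ?_
  have hbound t : ‖k.normed μ t • g (a - t) - k.normed μ t • g (b - t)‖ ≤
      k.normed μ t * (K * dist a b) := by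
    rw [← smul_sub, norm_smul, Real.norm_of_nonneg (k.nonneg_normed t), ← dist_eq_norm,
      ← dist_sub_right a b t]
    exact mul_le_mul_of_nonneg_left (hg.dist_le_mul _ _) (k.nonneg_normed t)
  rw [dist_eq_norm, convolution_def, convolution_def, ← integral_sub (hconv a).integrable
    (hconv b).integrable]
  calc _ ≤ ∫ t, k.normed μ t * (K * dist a b) ∂μ :=
        norm_integral_le_of_norm_le (k.integrable_normed.mul_const _) (.of_forall hbound)
    _ = K * dist a b := by rw [integral_mul_const, k.integral_normed, one_mul]

theorem LipschitzWith.exists_contDiff_lipschitzWith_dist_le [CompleteSpace F]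
    (hg : LipschitzWith K g) {ε : ℝ} (hε : 0 < ε) :
    ∃ ψ : E → F, ContDiff ℝ ∞ ψ ∧ LipschitzWith K ψ ∧ ∀ x, dist (ψ x) (g x) ≤ K * ε := by
  borelize E
  let k : ContDiffBump (0 : E) := ⟨ε / 2, ε, half_pos hε, half_lt_self hε⟩
  refine ⟨k.normed .addHaar ⋆[ContinuousLinearMap.lsmul ℝ ℝ, .addHaar] g,
    k.hasCompactSupport_normed.contDiff_convolution_left _ k.contDiff_normed
      hg.continuous.locallyIntegrable, k.lipschitzWith_normed_convolution hg,
    fun x => k.dist_normed_convolution_le hg.continuous.aestronglyMeasurable fun y hy => ?_⟩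
  exact (hg.dist_le_mul y x).trans (by gcongr; exact (Metric.mem_ball.1 hy).le)

end LipschitzSmoothing

section Duality

theorem MeasureTheory.Integrable.of_dist_le {α : Type*} [MeasurableSpace α] {ν : Measure α}
    [IsFiniteMeasure ν] {φ ψ : α → ℝ} {η : ℝ} (hφ : Integrable φ ν)
    (hψ : AEStronglyMeasurable ψ ν) (h : ∀ x, dist (ψ x) (φ x) ≤ η) : Integrable ψ ν :=
  (hφ.norm.add (integrable_const η)).mono' hψ (.of_forall fun x => by
    have := norm_le_norm_add_norm_sub' (ψ x) (φ x)
    rw [← dist_eq_norm] at this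
    simp only [Pi.add_apply]
    linarith [h x])

theorem MeasureTheory.abs_integral_sub_integral_le_of_dist_le {α : Type*} [MeasurableSpace α]
    {ν : Measure α} [IsFiniteMeasure ν] {φ ψ : α → ℝ} {η : ℝ} (hφ : Integrable φ ν)
    (hψ : Integrable ψ ν) (h : ∀ x, dist (ψ x) (φ x) ≤ η) :
    |∫ x, ψ x ∂ν - ∫ x, φ x ∂ν| ≤ η * ν.real Set.univ := by
  rw [← integral_sub hψ hφ]
  exact norm_integral_le_of_norm_le_const
    (.of_forall fun x => (dist_eq_norm (ψ x) (φ x)).symm.trans_le (h x))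

variable {E : Type*} [NormedAddCommGroup E] [InnerProductSpace ℝ E] [FiniteDimensional ℝ E]

theorem LipschitzWith.norm_gradient_le {K : ℝ≥0} {ψ : E → ℝ} (hψ : LipschitzWith K ψ) (x : E) :
    ‖gradient ψ x‖ ≤ K := by
  rw [gradient, LinearIsometryEquiv.norm_map]
  exact norm_fderiv_le_of_lipschitz ℝ hψ

variable [MeasurableSpace E] {μ : Measure E} [IsFiniteMeasure μ] {w : E → E}

theorem integral_inner_gradient_le_measureReal_univ (hw : ∀ᵐ x ∂μ, ‖w x‖ ≤ 1) {ψ : E → ℝ}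
    (hψ : LipschitzWith 1 ψ) : ∫ x, ⟪gradient ψ x, w x⟫ ∂μ ≤ μ.real Set.univ := by
  refine (le_abs_self _).trans ?_
  simpa using norm_integral_le_of_norm_le_const (μ := μ) (hw.mono fun x hx =>
    (norm_inner_le_norm (𝕜 := ℝ) (gradient ψ x) (w x)).trans
      (mul_le_one₀ (hψ.norm_gradient_le x) (norm_nonneg _) hx))

theorem integral_sub_integral_le_measureReal_univ [OpensMeasurableSpace E] {fp fm : Measure E}
    [IsFiniteMeasure fp] [IsFiniteMeasure fm] (hw : ∀ᵐ x ∂μ, ‖w x‖ ≤ 1)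
    (hdiv : ∀ ψ : E → ℝ, ContDiff ℝ 1 ψ →
      ∫ x, ⟪gradient ψ x, w x⟫ ∂μ = ∫ x, ψ x ∂fp - ∫ x, ψ x ∂fm)
    {φ : E → ℝ} (hφ : LipschitzWith 1 φ) (hφp : Integrable φ fp) (hφm : Integrable φ fm) :
    ∫ x, φ x ∂fp - ∫ x, φ x ∂fm ≤ μ.real Set.univ := by
  refine le_of_forall_pos_le_add fun δ hδ => ?_
  set C := fp.real Set.univ + fm.real Set.univ
  have hC : 0 ≤ C := by positivity
  set η := δ / (C + 1)
  obtain ⟨ψ, hψ_smooth, hψ_lip, hψφ⟩ :=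
    hφ.exists_contDiff_lipschitzWith_dist_le (ε := η) (by positivity)
  simp only [NNReal.coe_one, one_mul] at hψφ
  have hp := abs_le.1 <| abs_integral_sub_integral_le_of_dist_le hφp
    (hφp.of_dist_le hψ_smooth.continuous.aestronglyMeasurable hψφ) hψφ
  have hm := abs_le.1 <| abs_integral_sub_integral_le_of_dist_le hφm
    (hφm.of_dist_le hψ_smooth.continuous.aestronglyMeasurable hψφ) hψφ
  have hηC : η * C ≤ δ := by
    rw [div_mul_eq_mul_div, div_le_iff₀ (by positivity)]
    nlinarith
  calc ∫ x, φ x ∂fp - ∫ x, φ x ∂fm ≤ ∫ x, ψ x ∂fp - ∫ x, ψ x ∂fm + η * C := by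
        rw [mul_add]
        linarith [hp.1, hm.2]
    _ = ∫ x, ⟪gradient ψ x, w x⟫ ∂μ + η * C := by rw [hdiv ψ (hψ_smooth.of_le (by simp))]
    _ ≤ μ.real Set.univ + δ :=
        add_le_add (integral_inner_gradient_le_measureReal_univ hw hψ_lip) hηC

end Duality

theorem ContDiff.continuous_gradient {E : Type*} [NormedAddCommGroup E] [InnerProductSpace ℝ E]
    [CompleteSpace E] {ψ : E → ℝ} (hψ : ContDiff ℝ 1 ψ) : Continuous (gradient ψ) :=
  (InnerProductSpace.toDual ℝ E).symm.continuous.comp (hψ.continuous_fderiv one_ne_zero)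

theorem integral_inner_gradient_segment {E : Type*} [NormedAddCommGroup E]
    [InnerProductSpace ℝ E] [CompleteSpace E] {ψ : E → ℝ} (hψ : ContDiff ℝ 1 ψ) (x y : E) :
    ∫ t in Set.Icc (0 : ℝ) 1, ⟪gradient ψ ((1 - t) • x + t • y), x - y⟫ = ψ x - ψ y := by
  have hderiv (t : ℝ) : HasDerivAt (fun t : ℝ => -ψ ((1 - t) • x + t • y))
      ⟪gradient ψ ((1 - t) • x + t • y), x - y⟫ t := by
    have hline : HasDerivAt (fun t : ℝ => (1 - t) • x + t • y) (y - x) t :=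
      ((((hasDerivAt_id' t).const_sub 1).smul_const x).add
        ((hasDerivAt_id' t).smul_const y)).congr_deriv (by module)
    exact ((hψ.differentiable one_ne_zero _).hasGradientAt.hasFDerivAt.comp_hasDerivAt t
      hline).neg.congr_deriv (by simp)
  have hcont : Continuous fun t : ℝ => ⟪gradient ψ ((1 - t) • x + t • y), x - y⟫ := by
    have := hψ.continuous_gradient
    fun_prop
  rw [integral_Icc_eq_integral_Ioc, ← intervalIntegral.integral_of_le zero_le_one,
    intervalIntegral.integral_eq_sub_of_hasDerivAt (fun t _ => hderiv t)
      (hcont.intervalIntegrable 0 1)]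
  simp only [sub_self, zero_smul, one_smul, zero_add, sub_zero, add_zero, sub_neg_eq_add]
  ring

section TransportDensity

def segmentMap (q : ℝ × (E2 × E2)) : E2 := (1 - q.1) • q.2.1 + q.1 • q.2.2

def timedPlan (γ : Measure (E2 × E2)) : Measure (ℝ × (E2 × E2)) :=
  (volume.restrict (Set.Icc 0 1)).prod γ

/-- The direction `w₀` of the Beckmann flow, `w_γ = w₀ σ_γ`. -/
def transportDirection (γ : Measure (E2 × E2)) : E2 → E2 :=
  pushforwardDirection (timedPlan γ) segmentMap (fun q => edist q.2.1 q.2.2)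
    (fun q => q.2.1 - q.2.2)

theorem transportDensity_eq_map (γ : Measure (E2 × E2)) :
    transportDensity γ =
      ((timedPlan γ).withDensity fun q => edist q.2.1 q.2.2).map segmentMap :=
  rfl

theorem measurable_segmentMap : Measurable segmentMap := by
  unfold segmentMap
  fun_prop

variable {γ : Measure (E2 × E2)} {K : Set E2}

theorem lintegral_timedPlan [SFinite γ] {f : E2 × E2 → ℝ≥0∞} (hf : Measurable f) :
    ∫⁻ q, f q.2 ∂timedPlan γ = ∫⁻ p, f p ∂γ := by
  rw [timedPlan,
    lintegral_prod (fun q : ℝ × (E2 × E2) => f q.2) (hf.comp measurable_snd).aemeasurable]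
  simp

theorem transportDensity_univ [SFinite γ] :
    transportDensity γ Set.univ = ∫⁻ p, edist p.1 p.2 ∂γ := by
  rw [transportDensity_eq_map, Measure.map_apply measurable_segmentMap MeasurableSet.univ,
    Set.preimage_univ, withDensity_apply _ MeasurableSet.univ, Measure.restrict_univ,
    lintegral_timedPlan (f := fun p => edist p.1 p.2) (by fun_prop)]

theorem ae_timedPlan_segmentMap_mem [SFinite γ] (hseg : ∀ᵐ p ∂γ, segment ℝ p.1 p.2 ⊆ K) :
    ∀ᵐ q ∂timedPlan γ, segmentMap q ∈ K := by
  have ht : ∀ᵐ q ∂timedPlan γ, q.1 ∈ Set.Icc (0 : ℝ) 1 :=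
    Measure.quasiMeasurePreserving_fst.ae (ae_restrict_mem measurableSet_Icc)
  filter_upwards [ht, Measure.quasiMeasurePreserving_snd.ae hseg] with q hq hsegq
  exact hsegq ((segment_eq_image ℝ q.2.1 q.2.2).symm ▸ ⟨q.1, hq, rfl⟩)

theorem ae_transportDensity_mem [SFinite γ] (hK : MeasurableSet K)
    (hseg : ∀ᵐ p ∂γ, segment ℝ p.1 p.2 ⊆ K) : ∀ᵐ x ∂transportDensity γ, x ∈ K := by
  rw [transportDensity_eq_map]
  refine (ae_map_iff measurable_segmentMap.aemeasurable (p := (· ∈ K)) hK).2 ?_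
  exact (withDensity_absolutelyContinuous _ _).ae_le (ae_timedPlan_segmentMap_mem hseg)

theorem ae_mem_prod_of_ae_segment_subset (hseg : ∀ᵐ p ∂γ, segment ℝ p.1 p.2 ⊆ K) :
    ∀ᵐ p ∂γ, p ∈ K ×ˢ K :=
  hseg.mono fun _ hp => ⟨hp (left_mem_segment ℝ _ _), hp (right_mem_segment ℝ _ _)⟩

theorem integrable_dist_of_ae_segment_subset [IsFiniteMeasure γ] (hK : IsCompact K)
    (hseg : ∀ᵐ p ∂γ, segment ℝ p.1 p.2 ⊆ K) : Integrable (fun p => dist p.1 p.2) γ :=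
  Integrable.of_continuousOn_of_ae_mem (hK.prod hK) (ae_mem_prod_of_ae_segment_subset hseg)
    continuous_dist.continuousOn

theorem transportDensity_univ_eq_ofReal_integral [SFinite γ]
    (hint : Integrable (fun p => dist p.1 p.2) γ) :
    transportDensity γ Set.univ = ENNReal.ofReal (∫ p, dist p.1 p.2 ∂γ) := by
  rw [transportDensity_univ,
    ofReal_integral_eq_lintegral_ofReal hint (.of_forall fun _ => dist_nonneg)]
  simp_rw [edist_dist]

theorem isFiniteMeasure_transportDensity [IsFiniteMeasure γ] (hK : IsCompact K)
    (hseg : ∀ᵐ p ∂γ, segment ℝ p.1 p.2 ⊆ K) : IsFiniteMeasure (transportDensity γ) :=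
  ⟨by
    rw [transportDensity_univ_eq_ofReal_integral (integrable_dist_of_ae_segment_subset hK hseg)]
    exact ENNReal.ofReal_lt_top⟩

theorem isFiniteMeasure_timedPlan_withDensity [h : IsFiniteMeasure (transportDensity γ)] :
    IsFiniteMeasure ((timedPlan γ).withDensity fun q => edist q.2.1 q.2.2) := by
  rw [transportDensity_eq_map] at h
  exact Measure.isFiniteMeasure_of_map measurable_segmentMap.aemeasurable

theorem ae_norm_transportDirection_le_one [IsFiniteMeasure (transportDensity γ)] :
    ∀ᵐ x ∂transportDensity γ, ‖transportDirection γ x‖ ≤ 1 :=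
  have := isFiniteMeasure_timedPlan_withDensity (γ := γ)
  ae_norm_pushforwardDirection_le_one measurable_segmentMap (by fun_prop)
    (fun q => (edist_eq_enorm_sub _ _).ge) (by fun_prop)

theorem integral_inner_gradient_transportDirection [IsFiniteMeasure γ] (hK : IsCompact K)
    (hseg : ∀ᵐ p ∂γ, segment ℝ p.1 p.2 ⊆ K) {ψ : E2 → ℝ} (hψ : ContDiff ℝ 1 ψ) :
    ∫ x, ⟪gradient ψ x, transportDirection γ x⟫ ∂transportDensity γ =
      ∫ x, ψ x ∂γ.map Prod.fst - ∫ x, ψ x ∂γ.map Prod.snd := by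
  have := isFiniteMeasure_transportDensity hK hseg
  have := isFiniteMeasure_timedPlan_withDensity (γ := γ)
  have hG : Integrable (gradient ψ) (transportDensity γ) :=
    Integrable.of_continuousOn_of_ae_mem hK (ae_transportDensity_mem hK.measurableSet hseg)
      hψ.continuous_gradient.continuousOn
  have hψ1 : Integrable (fun p : E2 × E2 => ψ p.1) γ :=
    Integrable.of_continuousOn_of_ae_mem (hK.prod hK) (ae_mem_prod_of_ae_segment_subset hseg)
      (hψ.continuous.comp continuous_fst).continuousOn
  have hψ2 : Integrable (fun p : E2 × E2 => ψ p.2) γ :=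
    Integrable.of_continuousOn_of_ae_mem (hK.prod hK) (ae_mem_prod_of_ae_segment_subset hseg)
      (hψ.continuous.comp continuous_snd).continuousOn
  calc ∫ x, ⟪gradient ψ x, transportDirection γ x⟫ ∂transportDensity γ
      = ∫ q, ⟪gradient ψ (segmentMap q), q.2.1 - q.2.2⟫ ∂timedPlan γ :=
        integral_inner_pushforwardDirection (ν := timedPlan γ) measurable_segmentMap
          (by fun_prop) (fun q => (edist_eq_enorm_sub _ _).ge) hG
    _ = ∫ p, (∫ t in Set.Icc (0 : ℝ) 1,
          ⟪gradient ψ ((1 - t) • p.1 + t • p.2), p.1 - p.2⟫) ∂γ :=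
        integral_prod_symm _ (integrable_inner_comp (ν := timedPlan γ) measurable_segmentMap
          (by fun_prop) (fun q => (edist_eq_enorm_sub _ _).ge) hG)
    _ = ∫ p, ψ p.1 - ψ p.2 ∂γ := integral_congr_ae (.of_forall fun p =>
          integral_inner_gradient_segment hψ p.1 p.2)
    _ = ∫ x, ψ x ∂γ.map Prod.fst - ∫ x, ψ x ∂γ.map Prod.snd := by
      rw [integral_sub hψ1 hψ2,
        integral_map measurable_fst.aemeasurable hψ.continuous.aestronglyMeasurable,
        integral_map measurable_snd.aemeasurable hψ.continuous.aestronglyMeasurable]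

end TransportDensity

theorem beckmann_flow_mass_equals_cost_general
    (K : Set E2) (hK : IsCompact K)
    (fp fm : Measure E2) [IsFiniteMeasure fp] [IsFiniteMeasure fm]
    (hfpK : fp Kᶜ = 0) (hfmK : fm Kᶜ = 0)
    (γ : Measure (E2 × E2))
    (hγ1 : γ.map Prod.fst = fp) (hγ2 : γ.map Prod.snd = fm)
    (hseg : ∀ᵐ p ∂γ, segment ℝ p.1 p.2 ⊆ K)
    (hduality : ∃ φ : E2 → ℝ, LipschitzOnWith 1 φ K ∧
      ∫ p, dist p.1 p.2 ∂γ = ∫ x, φ x ∂fp - ∫ x, φ x ∂fm) :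
    -- (1) the mass of the flow is bounded by the transport cost
    transportDensity γ Set.univ ≤ ENNReal.ofReal (∫ p, dist p.1 p.2 ∂γ) ∧
    -- (2) `w_γ` is an admissible flow: there is a unit direction field `w₀` with
    --     `∇·(w₀ · σ_γ) = f⁺ - f⁻`
    (∃ w₀ : E2 → E2, (∀ᵐ x ∂(transportDensity γ), ‖w₀ x‖ ≤ 1) ∧
      ∀ ψ : E2 → ℝ, ContDiff ℝ 1 ψ →
        ∫ x, ⟪gradient ψ x, w₀ x⟫ ∂(transportDensity γ)
          = ∫ x, ψ x ∂fp - ∫ x, ψ x ∂fm) ∧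
    -- (3) minimality: every admissible flow `v = w·μ` has mass at least the cost
    (∀ (μ : Measure E2), IsFiniteMeasure μ → μ Kᶜ = 0 →
      ∀ w : E2 → E2, (∀ᵐ x ∂μ, ‖w x‖ ≤ 1) →
      (∀ ψ : E2 → ℝ, ContDiff ℝ 1 ψ →
        ∫ x, ⟪gradient ψ x, w x⟫ ∂μ = ∫ x, ψ x ∂fp - ∫ x, ψ x ∂fm) →
      ∫ p, dist p.1 p.2 ∂γ ≤ (μ Set.univ).toReal) := by
  have : IsFiniteMeasure γ := by
    have : IsFiniteMeasure (γ.map Prod.fst) := hγ1 ▸ inferInstance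
    exact Measure.isFiniteMeasure_of_map measurable_fst.aemeasurable
  have := isFiniteMeasure_transportDensity hK hseg
  refine ⟨(transportDensity_univ_eq_ofReal_integral
      (integrable_dist_of_ae_segment_subset hK hseg)).le,
    ⟨transportDirection γ, ae_norm_transportDirection_le_one, fun ψ hψ =>
      hγ1 ▸ hγ2 ▸ integral_inner_gradient_transportDirection hK hseg hψ⟩,
    fun μ _ _ w hw hdiv => ?_⟩
  obtain ⟨φ, hφ, hcost⟩ := hduality
  obtain ⟨g, hg, hφg⟩ := hφ.extend_real
  have hfp : ∀ᵐ x ∂fp, x ∈ K := mem_ae_iff.2 hfpK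
  have hfm : ∀ᵐ x ∂fm, x ∈ K := mem_ae_iff.2 hfmK
  rw [hcost, integral_congr_ae (hfp.mono fun _ hx => hφg hx),
    integral_congr_ae (hfm.mono fun _ hx => hφg hx)]
  exact integral_sub_integral_le_measureReal_univ hw hdiv hg
    (Integrable.of_continuousOn_of_ae_mem hK hfp hg.continuous.continuousOn)
    (Integrable.of_continuousOn_of_ae_mem hK hfm hg.continuous.continuousOn)

/-- the Beckmann flow `w_γ = -σ_γ ∇φ` induced by a transport plan has mass
at most the transport cost: `|w_γ|(K) ≤ σ_γ(K) ≤ ∫ |x - y| dγ`; moreover, if `γ` is an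
optimal plan and strong duality holds (there is a Kantorovich potential `φ`), then `w_γ`
minimizes the mass among all vector measures `v = w·μ` with `∇·v = f⁺ - f⁻`, and the
minimal mass equals `∫ |x - y| dγ`. -/
theorem beckmann_flow_mass_equals_cost
    (K : Set E2) (hK : IsCompact K) (hKne : K.Nonempty)
    (fp fm : Measure E2) [IsFiniteMeasure fp] [IsFiniteMeasure fm]
    (hfpK : fp Kᶜ = 0) (hfmK : fm Kᶜ = 0)
    (hmass : fp Set.univ = fm Set.univ)
    (γ : Measure (E2 × E2))
    (hγ1 : γ.map Prod.fst = fp) (hγ2 : γ.map Prod.snd = fm)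
    (hseg : ∀ᵐ p ∂γ, segment ℝ p.1 p.2 ⊆ K)
    (hopt : ∀ γ' : Measure (E2 × E2), γ'.map Prod.fst = fp → γ'.map Prod.snd = fm →
      ∫ p, dist p.1 p.2 ∂γ ≤ ∫ p, dist p.1 p.2 ∂γ')
    (hduality : ∃ φ : E2 → ℝ, LipschitzOnWith 1 φ K ∧
      ∫ p, dist p.1 p.2 ∂γ = ∫ x, φ x ∂fp - ∫ x, φ x ∂fm) :
    -- (1) the mass of the flow is bounded by the transport cost
    transportDensity γ Set.univ ≤ ENNReal.ofReal (∫ p, dist p.1 p.2 ∂γ) ∧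
    -- (2) `w_γ` is an admissible flow: there is a unit direction field `w₀` with
    --     `∇·(w₀ · σ_γ) = f⁺ - f⁻`
    (∃ w₀ : E2 → E2, (∀ᵐ x ∂(transportDensity γ), ‖w₀ x‖ ≤ 1) ∧
      ∀ ψ : E2 → ℝ, ContDiff ℝ 1 ψ →
        ∫ x, ⟪gradient ψ x, w₀ x⟫ ∂(transportDensity γ)
          = ∫ x, ψ x ∂fp - ∫ x, ψ x ∂fm) ∧
    -- (3) minimality: every admissible flow `v = w·μ` has mass at least the cost
    (∀ (μ : Measure E2), IsFiniteMeasure μ → μ Kᶜ = 0 →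
      ∀ w : E2 → E2, (∀ᵐ x ∂μ, ‖w x‖ ≤ 1) →
      (∀ ψ : E2 → ℝ, ContDiff ℝ 1 ψ →
        ∫ x, ⟪gradient ψ x, w x⟫ ∂μ = ∫ x, ψ x ∂fp - ∫ x, ψ x ∂fm) →
      ∫ p, dist p.1 p.2 ∂γ ≤ (μ Set.univ).toReal) :=
  beckmann_flow_mass_equals_cost_general K hK fp fm hfpK hfmK γ hγ1 hγ2 hseg hduality
end
end
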